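/- arXiv:0910.0747 — 2 statements merged into one kernel-verified Lean document; each statement's English description precedes it below -/
import Mathlib

section
/- Narrowing for algorithmic subtyping in System F<:: if (Δ ++ Q :: Γ) ⊢ M <: N and Γ ⊢ P <: Q, then (Δ ++ P :: Γ) ⊢ M <: N. -/
inductive FTy : Type
  | tvar : ℕ → FTy
  | top : FTy
  | arr : FTy → FTy → FTy
  | all : FTy → FTy → FTy

def liftRen (ρ : ℕ → ℕ) : ℕ → ℕ
  | 0 => 0
  | n + 1 => ρ n + 1

/-- Apply a renaming to the free type variables of a type. -/
def tyRename (ρ : ℕ → ℕ) : FTy → FTy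
  | FTy.tvar n => FTy.tvar (ρ n)
  | FTy.top => FTy.top
  | FTy.arr a b => FTy.arr (tyRename ρ a) (tyRename ρ b)
  | FTy.all a b => FTy.all (tyRename ρ a) (tyRename (liftRen ρ) b)

/-- Shift all free type variables up by `k`. -/
def shiftUp (k : ℕ) : FTy → FTy := tyRename (· + k)

/-- Algorithmic subtyping for System F<:. -/
inductive Subty : List FTy → FTy → FTy → Prop
  | top {Γ : List FTy} {S : FTy} : Subty Γ S FTy.top
  | refl {Γ : List FTy} {i : ℕ} : i < Γ.length → Subty Γ (FTy.tvar i) (FTy.tvar i)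
  | trans {Γ : List FTy} {i : ℕ} {U T : FTy} :
      Γ[i]? = some U → Subty Γ (shiftUp (i + 1) U) T → Subty Γ (FTy.tvar i) T
  | arrow {Γ : List FTy} {S₁ S₂ T₁ T₂ : FTy} :
      Subty Γ T₁ S₁ → Subty Γ S₂ T₂ → Subty Γ (FTy.arr S₁ S₂) (FTy.arr T₁ T₂)
  | all {Γ : List FTy} {S₁ S₂ T₁ T₂ : FTy} :
      Subty Γ T₁ S₁ → Subty (T₁ :: Γ) S₂ T₂ → Subty Γ (FTy.all S₁ S₂) (FTy.all T₁ T₂)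

/-!
Transitivity and narrowing are proved together by induction on the size of the middle type `Q`.
Narrowing at `Q` only needs transitivity at shifted copies of `Q`, which have the same size: in
the one interesting case, a variable bounded by `Q` in `Δ ++ Q :: Γ` now has bound `P`, and
`tvar i <: N` is rebuilt by chaining the weakened `P <: Q` with the given `Q <: N`. Transitivity at
`Q` in turn needs transitivity at the components of `Q` and, for a quantifier `all Q₁ Q₂`,
narrowing at `Q₁`, to move the body comparison into the context with the smaller bound.
-/

namespace FTy

def size : FTy → ℕ
  | tvar _ => 1
  | top => 1
  | arr a b => a.size + b.size + 1
  | all a b => a.size + b.size + 1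

theorem size_tyRename (ρ : ℕ → ℕ) (A : FTy) : (tyRename ρ A).size = A.size := by
  induction A generalizing ρ <;> simp [tyRename, size, *]

end FTy

theorem liftRen_comp (ρ σ : ℕ → ℕ) : liftRen ρ ∘ liftRen σ = liftRen (ρ ∘ σ) := by
  funext n
  cases n <;> rfl

theorem tyRename_tyRename (ρ σ : ℕ → ℕ) (A : FTy) :
    tyRename ρ (tyRename σ A) = tyRename (ρ ∘ σ) A := by
  induction A generalizing ρ σ <;> simp [tyRename, liftRen_comp, *]

structure CtxRenaming (ρ : ℕ → ℕ) (Γ Γ' : List FTy) : Prop where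
  lt_length : ∀ n, n < Γ.length → ρ n < Γ'.length
  getElem? : ∀ n U, Γ[n]? = some U →
    ∃ U', Γ'[ρ n]? = some U' ∧ tyRename ρ (shiftUp (n + 1) U) = shiftUp (ρ n + 1) U'

namespace CtxRenaming

theorem cons {ρ : ℕ → ℕ} {Γ Γ' : List FTy} (h : CtxRenaming ρ Γ Γ') (T : FTy) :
    CtxRenaming (liftRen ρ) (T :: Γ) (tyRename ρ T :: Γ') where
  lt_length
    | 0, _ => by simp [liftRen]
    | n + 1, hn => by simpa [liftRen] using h.lt_length n (by simpa using hn)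
  getElem?
    | 0, U, hU => by
      obtain rfl : T = U := by simpa using hU
      refine ⟨tyRename ρ T, rfl, ?_⟩
      simp only [shiftUp, tyRename_tyRename]
      rfl
    | n + 1, U, hU => by
      obtain ⟨U', hU', hshift⟩ := h.getElem? n U (by simpa using hU)
      refine ⟨U', by simpa [liftRen] using hU', ?_⟩
      have hcomm : liftRen ρ ∘ (· + (n + 1 + 1)) = (· + 1) ∘ (ρ ∘ (· + (n + 1))) := rfl
      simp only [shiftUp, tyRename_tyRename] at hshift ⊢
      rw [hcomm, ← tyRename_tyRename, hshift, tyRename_tyRename]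
      rfl

theorem append_left (E Γ : List FTy) : CtxRenaming (· + E.length) Γ (E ++ Γ) where
  lt_length n hn := by simp; omega
  getElem? n U hU := by
    refine ⟨U, by simpa [List.getElem?_append_right] using hU, ?_⟩
    simp only [shiftUp, tyRename_tyRename]
    congr 1
    funext m
    simp only [Function.comp_apply]
    omega

end CtxRenaming

theorem List.getElem?_append_cons_of_ne {α : Type*} {Δ Γ : List α} (P Q : α) {i : ℕ}
    (hi : i ≠ Δ.length) : (Δ ++ P :: Γ)[i]? = (Δ ++ Q :: Γ)[i]? := by
  have hset : (Δ ++ Q :: Γ).set Δ.length P = Δ ++ P :: Γ := by simp [List.set_append_right]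
  rw [← hset, List.getElem?_set_ne (Ne.symm hi)]

namespace Subty

theorem rename {Γ Γ' : List FTy} {ρ : ℕ → ℕ} {S T : FTy} (h : Subty Γ S T)
    (hρ : CtxRenaming ρ Γ Γ') : Subty Γ' (tyRename ρ S) (tyRename ρ T) := by
  induction h generalizing ρ Γ' with
  | top => exact top
  | refl hi => exact refl (hρ.lt_length _ hi)
  | trans hU _ ih =>
    obtain ⟨U', hU', hshift⟩ := hρ.getElem? _ _ hU
    exact trans hU' (hshift ▸ ih hρ)
  | arrow _ _ ih₁ ih₂ => exact arrow (ih₁ hρ) (ih₂ hρ)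
  | all _ _ ih₁ ih₂ => exact all (ih₁ hρ) (ih₂ (hρ.cons _))

theorem weaken {Γ : List FTy} {S T : FTy} (h : Subty Γ S T) (E : List FTy) :
    Subty (E ++ Γ) (shiftUp E.length S) (shiftUp E.length T) :=
  h.rename (CtxRenaming.append_left E Γ)

def TransAt (Q : FTy) : Prop :=
  ∀ Γ S T, Subty Γ S Q → Subty Γ Q T → Subty Γ S T

def NarrowAt (Q : FTy) : Prop :=
  ∀ Γ Δ P M N, Subty Γ P Q → Subty (Δ ++ Q :: Γ) M N → Subty (Δ ++ P :: Γ) M N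

theorem narrowAt_of_transAt {Q : FTy} (htrans : ∀ k, TransAt (shiftUp k Q)) : NarrowAt Q := by
  intro Γ Δ P M N hPQ h
  generalize hE : Δ ++ Q :: Γ = E at h
  induction h generalizing Δ with subst hE
  | top => exact top
  | refl hi => exact refl (by simpa using hi)
  | @trans _ i U _ hU _ ih =>
    by_cases hi : i = Δ.length
    · subst hi
      obtain rfl : Q = U := by simpa using hU
      have hPQ' : Subty (Δ ++ P :: Γ) (shiftUp (Δ.length + 1) P) (shiftUp (Δ.length + 1) Q) := by
        simpa using hPQ.weaken (Δ ++ [P])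
      exact trans (by simp) (htrans _ _ _ _ hPQ' (ih Δ rfl))
    · rw [← List.getElem?_append_cons_of_ne P Q hi] at hU
      exact trans hU (ih Δ rfl)
  | arrow _ _ ih₁ ih₂ => exact arrow (ih₁ Δ rfl) (ih₂ Δ rfl)
  | @all _ _ _ T₁ _ _ _ ih₁ ih₂ => exact all (ih₁ Δ rfl) (ih₂ (T₁ :: Δ) rfl)

theorem transAt_of_lt {Q : FTy} (hlt : ∀ Q', Q'.size < Q.size → TransAt Q') : TransAt Q := by
  intro Γ S T hSQ hQT
  induction hSQ generalizing T with
  | top => cases hQT; exact top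
  | refl => exact hQT
  | trans hU _ ih => exact trans hU (ih hlt _ hQT)
  | @arrow _ _ _ Q₁ Q₂ hQS₁ hSQ₂ =>
    cases hQT with
    | top => exact top
    | arrow hTQ₁ hQT₂ =>
      have h₁ : Q₁.size < (Q₁.arr Q₂).size := by simp [FTy.size]
      have h₂ : Q₂.size < (Q₁.arr Q₂).size := by simp [FTy.size]
      exact arrow (hlt Q₁ h₁ _ _ _ hTQ₁ hQS₁) (hlt Q₂ h₂ _ _ _ hSQ₂ hQT₂)
  | @all Γ _ _ Q₁ Q₂ hQS₁ hSQ₂ =>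
    cases hQT with
    | top => exact top
    | @all _ _ _ T₁ _ hTQ₁ hQT₂ =>
      have h₁ : Q₁.size < (Q₁.all Q₂).size := by simp [FTy.size]
      have h₂ : Q₂.size < (Q₁.all Q₂).size := by simp [FTy.size]
      have hnarrow : NarrowAt Q₁ :=
        narrowAt_of_transAt fun k => hlt _ (by simpa [shiftUp, FTy.size_tyRename] using h₁)
      have hSQ₂' : Subty (T₁ :: Γ) _ Q₂ := hnarrow Γ [] T₁ _ _ hTQ₁ hSQ₂
      exact all (hlt Q₁ h₁ _ _ _ hTQ₁ hQS₁) (hlt Q₂ h₂ _ _ _ hSQ₂' hQT₂)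

theorem transAt (Q : FTy) : TransAt Q :=
  transAt_of_lt fun Q' _ => transAt Q'
termination_by Q.size

end Subty

theorem sub_narrowing {Γ Δ : List FTy} {P Q M N : FTy}
    (h₁ : Subty (Δ ++ Q :: Γ) M N) (h₂ : Subty Γ P Q) :
    Subty (Δ ++ P :: Γ) M N :=
  Subty.narrowAt_of_transAt (fun k => Subty.transAt (shiftUp k Q)) Γ Δ P M N h₂ h₁
end

section
/- (CR 2) Reducibility is preserved by one-step reduction: if Red M A and M → M', then Red M' A. -/
inductive Ty : Type
  | iota : Ty
  | arr : Ty → Ty → Ty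

inductive Tm : Type
  | var : ℕ → Tm
  | const : Tm
  | app : Tm → Tm → Tm
  | abs : Ty → Tm → Tm

def rename (ρ : ℕ → ℕ) : Tm → Tm
  | Tm.var n => Tm.var (ρ n)
  | Tm.const => Tm.const
  | Tm.app m n => Tm.app (rename ρ m) (rename ρ n)
  | Tm.abs a r => Tm.abs a (rename (liftRen ρ) r)

def liftSub (σ : ℕ → Tm) : ℕ → Tm
  | 0 => Tm.var 0
  | n + 1 => rename Nat.succ (σ n)

/-- Simultaneous capture-avoiding substitution. -/
def subst (σ : ℕ → Tm) : Tm → Tm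
  | Tm.var n => σ n
  | Tm.const => Tm.const
  | Tm.app m n => Tm.app (subst σ m) (subst σ n)
  | Tm.abs a r => Tm.abs a (subst (liftSub σ) r)

/-- `subst0 s t` is `t[0 := s]`. -/
def subst0 (s : Tm) (t : Tm) : Tm :=
  subst (fun n => match n with | 0 => s | Nat.succ k => Tm.var k) t

inductive Typed : List Ty → Tm → Ty → Prop
  | var {Γ : List Ty} {n : ℕ} {a : Ty} :
      Γ[n]? = some a → Typed Γ (Tm.var n) a
  | const {Γ : List Ty} {a : Ty} : Typed Γ Tm.const a
  | app {Γ : List Ty} {m n : Tm} {a b : Ty} :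
      Typed Γ m (Ty.arr a b) → Typed Γ n a → Typed Γ (Tm.app m n) b
  | abs {Γ : List Ty} {r : Tm} {a b : Ty} :
      Typed (a :: Γ) r b → Typed Γ (Tm.abs a r) (Ty.arr a b)

/-- One-step (β) reduction. -/
inductive Step : Tm → Tm → Prop
  | beta {a : Ty} {r m : Tm} : Step (Tm.app (Tm.abs a r) m) (subst0 m r)
  | appl {m m' n : Tm} : Step m m' → Step (Tm.app m n) (Tm.app m' n)
  | appr {m n n' : Tm} : Step n n' → Step (Tm.app m n) (Tm.app m n')
  | abs {a : Ty} {r r' : Tm} : Step r r' → Step (Tm.abs a r) (Tm.abs a r')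

/-- Strong normalization. -/
inductive SN : Tm → Prop
  | intro {M : Tm} : (∀ M', Step M M' → SN M') → SN M

/-- Tait-style reducibility, by recursion on the type. -/
def Red : Tm → Ty → Prop
  | M, Ty.iota => Typed [] M Ty.iota ∧ SN M
  | M, Ty.arr a b => Typed [] M (Ty.arr a b) ∧ ∀ U, Red U a → Red (Tm.app M U) b

/-!
Induction on the type, with typing carried along by subject reduction. At `ι`, reducts of a
strongly normalising term are strongly normalising; at `a → b`, a step `M → M'` gives
`M U → M' U`, so the induction hypothesis at `b` transfers `Red (M U) b` to `Red (M' U) b`.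
-/

theorem Typed.rename {Γ Δ : List Ty} {t : Tm} {A : Ty} {ρ : ℕ → ℕ}
    (h : Typed Γ t A) (hρ : ∀ n a, Γ[n]? = some a → Δ[ρ n]? = some a) :
    Typed Δ (_root_.rename ρ t) A := by
  induction h generalizing Δ ρ with
  | var hget => exact Typed.var (hρ _ _ hget)
  | const => exact Typed.const
  | app _ _ ihm ihn => exact Typed.app (ihm hρ) (ihn hρ)
  | abs _ ih =>
    refine Typed.abs (ih ?_)
    rintro (_ | n) c hn
    · exact hn
    · exact hρ n c hn

theorem Typed.subst {Γ Δ : List Ty} {t : Tm} {A : Ty} {σ : ℕ → Tm}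
    (h : Typed Γ t A) (hσ : ∀ n a, Γ[n]? = some a → Typed Δ (σ n) a) :
    Typed Δ (_root_.subst σ t) A := by
  induction h generalizing Δ σ with
  | var hget => exact hσ _ _ hget
  | const => exact Typed.const
  | app _ _ ihm ihn => exact Typed.app (ihm hσ) (ihn hσ)
  | abs _ ih =>
    refine Typed.abs (ih ?_)
    rintro (_ | n) c hn
    · exact Typed.var hn
    · exact (hσ n c hn).rename fun _ _ h => h

theorem Typed.subst0 {Γ : List Ty} {r m : Tm} {a b : Ty}
    (hr : Typed (a :: Γ) r b) (hm : Typed Γ m a) : Typed Γ (_root_.subst0 m r) b := by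
  refine hr.subst ?_
  rintro (_ | n) c hn
  · cases hn
    exact hm
  · exact Typed.var hn

theorem Typed.of_step {Γ : List Ty} {t t' : Tm} {A : Ty}
    (h : Typed Γ t A) (hs : Step t t') : Typed Γ t' A := by
  induction hs generalizing Γ A with
  | beta =>
    obtain _ | _ | ⟨hf, hm⟩ := h
    obtain _ | _ | _ | hr := hf
    exact hr.subst0 hm
  | appl _ ih =>
    obtain _ | _ | ⟨hm, hn⟩ := h
    exact Typed.app (ih hm) hn
  | appr _ ih =>
    obtain _ | _ | ⟨hm, hn⟩ := h
    exact Typed.app hm (ih hn)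
  | abs _ ih =>
    obtain _ | _ | _ | hr := h
    exact Typed.abs (ih hr)

theorem SN.of_step {M M' : Tm} (h : SN M) (hs : Step M M') : SN M' := by
  obtain ⟨h⟩ := h
  exact h M' hs

theorem Red.typed {M : Tm} {A : Ty} (h : Red M A) : Typed [] M A := by
  cases A with
  | iota => exact h.1
  | arr => exact h.1

theorem cr2 {M M' : Tm} {A : Ty} (h : Red M A) (hs : Step M M') : Red M' A := by
  induction A generalizing M M' with
  | iota => exact ⟨h.typed.of_step hs, h.2.of_step hs⟩
  | arr _ _ _ ihb =>
    exact ⟨h.typed.of_step hs, fun U hU => ihb (h.2 U hU) (Step.appl hs)⟩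
end
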